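/- arXiv:0805.3012 — 3 statements merged into one kernel-verified Lean document; each statement's English description precedes it below -/
import Mathlib

section
/- For all k, k' in the torus T = [0,1], the kernel R(k,k') = (4/3)(2 sin²(2πk) sin²(πk') + 2 sin²(2πk') sin²(πk) − sin²(2πk) sin²(2πk')) is nonnegative. -/
/-! With `s = sin² (π k)` and `t = sin² (π k')` one has `sin² (2π k) = 4 s (1 - s)`, and the kernel
factors as `(32/3) s t ((1 - s) t + s (1 - t))`, a sum of products of squares. -/

open Real

/-- The collision kernel `R(k,k')` of the energy-momentum conserving chain. -/
noncomputable def collisionKernel (k k' : ℝ) : ℝ :=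
  (4/3) * (2 * sin (2*π*k)^2 * sin (π*k')^2 + 2 * sin (2*π*k')^2 * sin (π*k)^2
    - sin (2*π*k)^2 * sin (2*π*k')^2)

theorem collisionKernel_eq (k k' : ℝ) :
    collisionKernel k k' = 32/3 * sin (π*k)^2 * sin (π*k')^2 *
      (cos (π*k)^2 * sin (π*k')^2 + sin (π*k)^2 * cos (π*k')^2) := by
  rw [collisionKernel, mul_assoc 2 π k, mul_assoc 2 π k', sin_two_mul, sin_two_mul]
  linear_combination
    (-(32/3) * sin (π*k)^2 * sin (π*k')^2 * cos (π*k)^2) * sin_sq_add_cos_sq (π*k') +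
    (-(32/3) * sin (π*k)^2 * sin (π*k')^2 * cos (π*k')^2) * sin_sq_add_cos_sq (π*k)

/-- the kernel `R` is nonnegative on the torus `[0,1]`. -/
theorem collisionKernel_nonneg :
    ∀ k ∈ Set.Icc (0:ℝ) 1, ∀ k' ∈ Set.Icc (0:ℝ) 1, 0 ≤ collisionKernel k k' := by
  intro k _ k' _
  rw [collisionKernel_eq]
  positivity
end

section
/- Under the same assumptions on α (unpinned case), there is a constant C₁ > 0 with |α̂'(k)| ≤ C₁|k| for all k ∈ [−1/2, 1/2], and the derivative of the dispersion relation ω = √α̂ is bounded: sup_k |ω'(k)| < ∞. -/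
/-!
Exponential decay of `α` justifies differentiating `α̂(k) = ∑ α(z) cos(2πkz)` termwise, and
`|sin x| ≤ |x|` turns `α̂'(k) = -∑ 2πz α(z) sin(2πkz)` into `|α̂'(k)| ≤ C|k|`. As
`α̂(0) = α̂'(0) = 0 < α̂''(0)`, `α̂(k) ≥ c k²` near `0`, and by compactness and positivity on the
whole torus. Hence `|ω'| = |α̂'| / (2√α̂) ≤ C / (2√c)` for `k ≠ 0`. At `k = 0`, where `ω` has a
corner, `deriv` takes the value `0`, as it does for every even function.
-/

open Real

noncomputable def cosSeries (a : ℤ → ℝ) (k : ℝ) : ℝ := ∑' z : ℤ, a z * cos (2 * π * k * z)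

noncomputable def sinSeries (a : ℤ → ℝ) (k : ℝ) : ℝ := ∑' z : ℤ, a z * sin (2 * π * k * z)

lemma summable_pow_mul_of_abs_le_mul_exp {a : ℤ → ℝ} {C c : ℝ} (hc : 0 < c)
    (ha : ∀ y : ℤ, |a y| ≤ C * exp (-c * |(y : ℝ)|)) (n : ℕ) :
    Summable fun z : ℤ => (z : ℝ) ^ n * a z := by
  have hexp : Summable fun z : ℤ => |(z : ℝ)| ^ n * exp (-c * |(z : ℝ)|) :=
    .of_nat_of_neg (by simpa using summable_pow_mul_exp_neg_nat_mul n hc)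
      (by simpa using summable_pow_mul_exp_neg_nat_mul n hc)
  refine (hexp.mul_left C).of_norm_bounded fun z => ?_
  rw [norm_mul, norm_pow, Real.norm_eq_abs, Real.norm_eq_abs, mul_left_comm]
  exact mul_le_mul_of_nonneg_left (ha z) (by positivity)

section FourierSeries

variable {a : ℤ → ℝ}

lemma cosSeries_neg (a : ℤ → ℝ) (k : ℝ) : cosSeries a (-k) = cosSeries a k := by
  simp only [cosSeries, mul_neg, neg_mul, cos_neg]

lemma continuous_cosSeries (h : Summable a) : Continuous (cosSeries a) :=
  continuous_tsum (fun z => by fun_prop) h.abs fun z k => by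
    simpa [abs_mul] using mul_le_mul_of_nonneg_left (abs_cos_le_one _) (abs_nonneg (a z))

lemma hasDerivAt_two_pi_mul_int (z : ℤ) (k : ℝ) :
    HasDerivAt (fun k : ℝ => 2 * π * k * z) (2 * π * z) k := by
  simpa using ((hasDerivAt_id k).const_mul (2 * π)).mul_const (z : ℝ)

lemma hasDerivAt_cosSeries (h₀ : Summable a) (h₁ : Summable fun z : ℤ => (z : ℝ) * a z)
    (k : ℝ) : HasDerivAt (cosSeries a) (-sinSeries (fun z => 2 * π * z * a z) k) k := by
  have hterm : ∀ (z : ℤ) (k : ℝ), HasDerivAt (fun k => a z * cos (2 * π * k * z))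
      (-(2 * π * z * a z * sin (2 * π * k * z))) k := fun z k =>
    ((hasDerivAt_two_pi_mul_int z k).cos.const_mul (a z)).congr_deriv (by ring)
  have hbound : ∀ (z : ℤ) (k : ℝ),
      ‖-(2 * π * z * a z * sin (2 * π * k * z))‖ ≤ |2 * π * z * a z| := fun z k => by
    rw [norm_neg, norm_mul, Real.norm_eq_abs, Real.norm_eq_abs]
    exact mul_le_of_le_one_right (abs_nonneg _) (abs_sin_le_one _)
  have hu : Summable fun z : ℤ => |2 * π * z * a z| := by
    simpa only [mul_assoc] using (h₁.mul_left (2 * π)).abs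
  have := hasDerivAt_tsum hu hterm hbound (y₀ := 0) (by simpa using h₀) k
  rwa [tsum_neg] at this

lemma hasDerivAt_sinSeries (h₁ : Summable fun z : ℤ => (z : ℝ) * a z) (k : ℝ) :
    HasDerivAt (sinSeries a) (cosSeries (fun z => 2 * π * z * a z) k) k := by
  have hterm : ∀ (z : ℤ) (k : ℝ), HasDerivAt (fun k => a z * sin (2 * π * k * z))
      (2 * π * z * a z * cos (2 * π * k * z)) k := fun z k =>
    ((hasDerivAt_two_pi_mul_int z k).sin.const_mul (a z)).congr_deriv (by ring)
  have hbound : ∀ (z : ℤ) (k : ℝ),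
      ‖2 * π * z * a z * cos (2 * π * k * z)‖ ≤ |2 * π * z * a z| := fun z k => by
    rw [norm_mul, Real.norm_eq_abs, Real.norm_eq_abs]
    exact mul_le_of_le_one_right (abs_nonneg _) (abs_cos_le_one _)
  have hu : Summable fun z : ℤ => |2 * π * z * a z| := by
    simpa only [mul_assoc] using (h₁.mul_left (2 * π)).abs
  exact hasDerivAt_tsum hu hterm hbound (y₀ := 0) (by simp) k

-- `|sin x| ≤ |x|` bounds the `z`-th term by `2π|k| |z a z|`.
lemma exists_abs_sinSeries_le (h₁ : Summable fun z : ℤ => (z : ℝ) * a z) :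
    ∃ C > 0, ∀ k, |sinSeries a k| ≤ C * |k| := by
  set S := ∑' z : ℤ, |z * a z|
  have hS : 0 ≤ S := tsum_nonneg fun z => abs_nonneg _
  refine ⟨2 * π * S + 1, by positivity, fun k => ?_⟩
  have hterm : ∀ z : ℤ, ‖a z * sin (2 * π * k * z)‖ ≤ 2 * π * |k| * |z * a z| := fun z =>
    calc ‖a z * sin (2 * π * k * z)‖ ≤ |a z| * |2 * π * k * z| := by
          rw [norm_mul, Real.norm_eq_abs, Real.norm_eq_abs]
          exact mul_le_mul_of_nonneg_left abs_sin_le_abs (abs_nonneg _)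
      _ = 2 * π * |k| * |z * a z| := by
          simp only [abs_mul, abs_two, abs_of_pos pi_pos]; ring
  calc |sinSeries a k| ≤ 2 * π * |k| * S :=
        tsum_of_norm_bounded (h₁.abs.hasSum.mul_left (2 * π * |k|)) hterm
    _ ≤ (2 * π * S + 1) * |k| := by nlinarith [abs_nonneg k, two_pi_pos]

end FourierSeries

lemma Function.Even.deriv_zero {f : ℝ → ℝ} (hf : f.Even) : deriv f 0 = 0 := by
  have h := deriv_comp_neg (f := f) (x := 0)
  rw [show (fun x => f (-x)) = f from funext hf, neg_zero] at h
  linarith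

-- `f t - f''(0)/4 * t²` is convex where `f'' > f''(0)/2`, and `0` is a critical point of it.
lemma exists_mul_sq_le_near_zero {f f' f'' : ℝ → ℝ} (hf : ∀ x, HasDerivAt f (f' x) x)
    (hf' : ∀ x, HasDerivAt f' (f'' x) x) (hcont : ContinuousAt f'' 0) (h₀ : f 0 = 0)
    (h₁ : f' 0 = 0) (h₂ : 0 < f'' 0) :
    ∃ δ > 0, ∀ t, |t| < δ → f'' 0 / 4 * t ^ 2 ≤ f t := by
  set q := f'' 0
  obtain ⟨δ, hδ, hball⟩ := Metric.eventually_nhds_iff_ball.1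
    (hcont.eventually (lt_mem_nhds (half_lt_self h₂)))
  set φ : ℝ → ℝ := fun t => f t - q / 4 * t ^ 2
  have hφ : ∀ x, HasDerivAt φ (f' x - q / 2 * x) x := fun x =>
    ((hf x).sub ((hasDerivAt_pow 2 x).const_mul (q / 4))).congr_deriv (by ring)
  have hφ' : ∀ x, HasDerivAt (fun x => f' x - q / 2 * x) (f'' x - q / 2) x := fun x =>
    ((hf' x).sub ((hasDerivAt_id x).const_mul (q / 2))).congr_deriv (by simp)
  have hconvex : ConvexOn ℝ (Metric.ball 0 δ) φ :=
    convexOn_of_hasDerivWithinAt2_nonneg (convex_ball 0 δ)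
      (fun x _ => (hφ x).continuousAt.continuousWithinAt)
      (fun x _ => (hφ x).hasDerivWithinAt) (fun x _ => (hφ' x).hasDerivWithinAt)
      (fun x hx => by linarith [hball x (interior_subset hx)])
  have hmin : IsMinOn φ (Metric.ball 0 δ) 0 := by
    refine hconvex.isMinOn_of_rightDeriv_eq_zero (by simpa [Metric.isOpen_ball.interior_eq]) ?_
    rw [(hφ 0).hasDerivWithinAt.derivWithin (uniqueDiffWithinAt_Ioi 0), h₁]
    ring
  refine ⟨δ, hδ, fun t ht => ?_⟩
  have : φ 0 ≤ φ t := hmin (mem_ball_zero_iff.2 ht)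
  simp only [φ, h₀] at this
  linarith

lemma exists_mul_sq_le_of_isCompact {f : ℝ → ℝ} {s : Set ℝ} (hs : IsCompact s)
    (hf : ContinuousOn f s) (hpos : ∀ k ∈ s, k ≠ 0 → 0 < f k) {c δ : ℝ} (hc : 0 < c) (hδ : 0 < δ)
    (hnear : ∀ k ∈ s, |k| < δ → c * k ^ 2 ≤ f k) :
    ∃ c' > 0, ∀ k ∈ s, c' * k ^ 2 ≤ f k := by
  set s' := s ∩ {k | δ ≤ |k|}
  have hs' : IsCompact s' := hs.inter_right (isClosed_le continuous_const continuous_abs)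
  have hδ' : ∀ k ∈ s', k ≠ 0 := fun k hk => abs_pos.1 (hδ.trans_le hk.2)
  obtain ⟨c₁, hc₁, hfar⟩ := hs'.exists_forall_le' (a := 0) (f := fun k => f k / k ^ 2)
    ((hf.mono Set.inter_subset_left).div (continuousOn_pow 2) fun k hk => pow_ne_zero 2 (hδ' k hk))
    fun k hk => div_pos (hpos k hk.1 (hδ' k hk)) (by positivity [hδ' k hk])
  refine ⟨min c c₁, lt_min hc hc₁, fun k hk => ?_⟩
  rcases lt_or_ge |k| δ with hk' | hk'
  · exact (mul_le_mul_of_nonneg_right (min_le_left _ _) (sq_nonneg k)).trans (hnear k hk hk')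
  · have hk0 : k ≠ 0 := hδ' k ⟨hk, hk'⟩
    calc min c c₁ * k ^ 2 ≤ f k / k ^ 2 * k ^ 2 := by
          gcongr; exact (min_le_right _ _).trans (hfar k ⟨hk, hk'⟩)
      _ = f k := div_mul_cancel₀ _ (pow_ne_zero 2 hk0)

lemma abs_deriv_sqrt_le {f : ℝ → ℝ} {f' c C k : ℝ} (hf : HasDerivAt f f' k) (hc : 0 < c)
    (hk : k ≠ 0) (hlow : c * k ^ 2 ≤ f k) (hup : |f'| ≤ C * |k|) :
    |deriv (fun x => √(f x)) k| ≤ C / (2 * √c) := by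
  have hfk : 0 < f k := lt_of_lt_of_le (by positivity) hlow
  have hsqrt : √c * |k| ≤ √(f k) := by
    simpa [Real.sqrt_mul hc.le, Real.sqrt_sq_eq_abs] using Real.sqrt_le_sqrt hlow
  rw [(hf.sqrt hfk.ne').deriv, abs_div, abs_of_pos (by positivity : 0 < 2 * √(f k))]
  calc |f'| / (2 * √(f k)) ≤ C * |k| / (2 * (√c * |k|)) := by
        gcongr
        exact (abs_nonneg _).trans hup
    _ = C / (2 * √c) := by field_simp

theorem dispersion_deriv_bounds_general (α : ℤ → ℝ)
    (hdecay : ∃ C₁ > (0:ℝ), ∃ C₂ > (0:ℝ), ∀ y : ℤ, |α y| ≤ C₁ * Real.exp (-C₂ * |(y:ℝ)|))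
    (hatα : ℝ → ℝ)
    (hhat : ∀ k : ℝ, hatα k = ∑' z : ℤ, α z * Real.cos (2*π*k*z))
    (hpos : ∀ k ∈ Set.Icc (-(1:ℝ)/2) (1/2), k ≠ 0 → 0 < hatα k)
    (h0 : hatα 0 = 0)
    (h2 : 0 < iteratedDeriv 2 hatα 0) :
    (∃ C₁ > (0:ℝ), ∀ k ∈ Set.Icc (-(1:ℝ)/2) (1/2), |deriv hatα k| ≤ C₁ * |k|)
    ∧ ∃ M : ℝ, ∀ k ∈ Set.Icc (-(1:ℝ)/2) (1/2),
        |deriv (fun k => Real.sqrt (hatα k)) k| ≤ M := by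
  obtain ⟨_, -, r, hr, hbound⟩ := hdecay
  have hsum := summable_pow_mul_of_abs_le_mul_exp hr hbound
  set β : ℤ → ℝ := fun z => 2 * π * z * α z
  have hα : hatα = cosSeries α := funext hhat
  have hf' : ∀ k, HasDerivAt hatα (-sinSeries β k) k :=
    hα ▸ hasDerivAt_cosSeries (by simpa using hsum 0) (by simpa using hsum 1)
  have hβ : Summable fun z : ℤ => (z : ℝ) * β z := by
    simpa [β, sq, mul_assoc, mul_left_comm] using (hsum 2).mul_left (2 * π)
  have hf'' : ∀ k, HasDerivAt (fun k => -sinSeries β k)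
      (-cosSeries (fun z => 2 * π * z * β z) k) k :=
    fun k => (hasDerivAt_sinSeries hβ k).neg
  have hf''₀ : 0 < -cosSeries (fun z => 2 * π * z * β z) 0 := by
    rwa [iteratedDeriv_succ, iteratedDeriv_one, funext fun k => (hf' k).deriv, (hf'' 0).deriv]
      at h2
  obtain ⟨A, hA₀, hA⟩ := exists_abs_sinSeries_le hβ
  obtain ⟨δ, hδ, hnear⟩ := exists_mul_sq_le_near_zero hf' hf''
    (continuous_cosSeries (by simpa only [mul_assoc] using hβ.mul_left (2 * π))).neg.continuousAt
    h0 (by simp [sinSeries]) hf''₀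
  obtain ⟨c, hc, hlow⟩ := exists_mul_sq_le_of_isCompact isCompact_Icc
    (fun k _ => (hf' k).continuousAt.continuousWithinAt) hpos (by linarith) hδ
    (fun k _ => hnear k)
  refine ⟨⟨A, hA₀, fun k _ => by rw [(hf' k).deriv, abs_neg]; exact hA k⟩, A / (2 * √c),
    fun k hk => ?_⟩
  rcases eq_or_ne k 0 with rfl | hk₀
  · have hω : Function.Even fun k => √(hatα k) := fun k => by simp only [hα, cosSeries_neg]
    rw [hω.deriv_zero, abs_zero]
    positivity
  · exact abs_deriv_sqrt_le (hf' k) hc hk₀ (hlow k hk) ((abs_neg _).trans_le (hA k))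

/-- in the unpinned case `|α̂'(k)| ≤ C₁|k|` and the derivative of
`ω = √α̂` is bounded. -/
theorem dispersion_deriv_bounds (α : ℤ → ℝ)
    (hsymm : ∀ y : ℤ, α (-y) = α y)
    (hdecay : ∃ C₁ > (0:ℝ), ∃ C₂ > (0:ℝ), ∀ y : ℤ, |α y| ≤ C₁ * Real.exp (-C₂ * |(y:ℝ)|))
    (hatα : ℝ → ℝ)
    (hhat : ∀ k : ℝ, hatα k = ∑' z : ℤ, α z * Real.cos (2*π*k*z))
    (hpos : ∀ k ∈ Set.Icc (-(1:ℝ)/2) (1/2), k ≠ 0 → 0 < hatα k)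
    (h0 : hatα 0 = 0)
    (h2 : 0 < iteratedDeriv 2 hatα 0) :
    (∃ C₁ > (0:ℝ), ∀ k ∈ Set.Icc (-(1:ℝ)/2) (1/2), |deriv hatα k| ≤ C₁ * |k|)
    ∧ ∃ M : ℝ, ∀ k ∈ Set.Icc (-(1:ℝ)/2) (1/2),
        |deriv (fun k => Real.sqrt (hatα k)) k| ≤ M :=
  dispersion_deriv_bounds_general α hdecay hatα hhat hpos h0 h2
end

section
/- Let W solve ∂_t W(k,t) = γ ∫_T R(k,k')(W(k',t) − W(k,t)) dk' with initial condition W(k,0) = W₀(k), where W₀ is odd on the torus (W₀(−k) = −W₀(k)) and bounded. Then W(k,t) = W₀(k) e^{−γφ(k)t} where φ(k) = ∫_T R(k,k')dk' = (4/3)sin²(πk)(1+2cos²(πk)). -/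
/-!
The kernel `R(k, k')` is even and `1`-periodic in `k'`, so its integral against an odd periodic
function vanishes and the collision operator acts on such functions as multiplication by
`-φ(k)`, where `φ(k) = ∫ R(k, k') dk'`; hence `W₀(k) e^{-γ φ(k) t}` is a solution. Two solutions
bounded on `[0, T]` agree there: their difference `D` satisfies `|∂ₜ D| ≤ L sup |D|`, so by the
mean value theorem the bound on `|D|` halves on any time interval of length at most `1 / (2L)`,
and `D` vanishes interval by interval.
-/

open Real

open Set Filter Topology

theorem Function.Periodic.intervalIntegral_eq_zero_of_odd {E : Type*} [NormedAddCommGroup E]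
    [NormedSpace ℝ E] {f : ℝ → E} {T : ℝ} (hf : Function.Periodic f T)
    (hodd : ∀ x, f (-x) = -f x) : ∫ x in (0:ℝ)..T, f x = 0 := by
  have h : ∫ x in (0:ℝ)..T, f x = -∫ x in (0:ℝ)..T, f x := calc
    ∫ x in (0:ℝ)..T, f x = ∫ x in -T..-T + T, f x := by
        simpa using hf.intervalIntegral_add_eq 0 (-T)
    _ = ∫ x in (0:ℝ)..T, f (-x) := by simp [intervalIntegral.integral_comp_neg]
    _ = -∫ x in (0:ℝ)..T, f x := by simp only [hodd, intervalIntegral.integral_neg]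
  have h2 : (2 : ℝ) • ∫ x in (0:ℝ)..T, f x = 0 := by
    rw [two_smul]; nth_rw 1 [h]; exact neg_add_cancel _
  exact (smul_eq_zero.mp h2).resolve_left two_ne_zero

lemma collisionKernel_neg_right (k x : ℝ) : collisionKernel k (-x) = collisionKernel k x := by
  simp only [collisionKernel, mul_neg, sin_neg, neg_sq]

lemma collisionKernel_add_one_right (k x : ℝ) :
    collisionKernel k (x + 1) = collisionKernel k x := by
  have h1 : sin (π * (x + 1)) ^ 2 = sin (π * x) ^ 2 := by
    rw [mul_add_one, sin_add_pi, neg_sq]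
  have h2 : sin (2 * π * (x + 1)) ^ 2 = sin (2 * π * x) ^ 2 := by
    rw [mul_add_one, sin_add_two_pi]
  simp only [collisionKernel, h1, h2]

@[fun_prop]
lemma continuous_collisionKernel_right (k : ℝ) : Continuous (collisionKernel k) := by
  unfold collisionKernel; fun_prop

lemma abs_collisionKernel_le (k x : ℝ) : |collisionKernel k x| ≤ 20 / 3 := by
  have := sin_sq_le_one (π * x); have := sin_sq_le_one (2 * π * x)
  have := sin_sq_le_one (π * k); have := sin_sq_le_one (2 * π * k)
  have := sq_nonneg (sin (π * x)); have := sq_nonneg (sin (2 * π * x))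
  have := sq_nonneg (sin (π * k)); have := sq_nonneg (sin (2 * π * k))
  rw [abs_le, collisionKernel]
  constructor <;> nlinarith [mul_nonneg ‹0 ≤ sin (2 * π * k) ^ 2› ‹0 ≤ sin (π * x) ^ 2›]

lemma integral_sin_sq_nat_mul_pi {n : ℕ} (hn : n ≠ 0) :
    ∫ x in (0:ℝ)..1, sin (n * π * x) ^ 2 = 1 / 2 := by
  have hnπ : (n * π : ℝ) ≠ 0 := by positivity
  rw [intervalIntegral.integral_comp_mul_left (fun u => sin u ^ 2) hnπ, mul_zero, mul_one,
    integral_sin_sq, sin_nat_mul_pi]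
  simp only [sin_zero, zero_mul, sub_zero, zero_add, smul_eq_mul]
  field_simp

noncomputable def collisionFrequency (k : ℝ) : ℝ :=
  (4/3) * sin (π*k)^2 * (1 + 2 * cos (π*k)^2)

lemma integral_collisionKernel_right (k : ℝ) :
    ∫ x in (0:ℝ)..1, collisionKernel k x = collisionFrequency k := by
  have h1 := integral_sin_sq_nat_mul_pi one_ne_zero
  have h2 := integral_sin_sq_nat_mul_pi two_ne_zero
  push_cast at h1 h2
  rw [one_mul] at h1
  have hsplit : collisionKernel k = fun x ↦ (8/3 * sin (2*π*k)^2) * sin (π*x)^2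
      + (4/3 * (2 * sin (π*k)^2 - sin (2*π*k)^2)) * sin (2*π*x)^2 := by
    ext x; unfold collisionKernel; ring
  have hsin2 : sin (2*π*k) = 2 * sin (π*k) * cos (π*k) := by
    rw [mul_assoc, sin_two_mul]
  rw [hsplit, intervalIntegral.integral_add (Continuous.intervalIntegrable (by fun_prop) _ _)
      (Continuous.intervalIntegrable (by fun_prop) _ _),
    intervalIntegral.integral_const_mul, intervalIntegral.integral_const_mul, h1, h2,
    collisionFrequency, hsin2]
  ring

lemma collisionFrequency_nonneg (k : ℝ) : 0 ≤ collisionFrequency k := by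
  unfold collisionFrequency; positivity

lemma collisionFrequency_neg (k : ℝ) : collisionFrequency (-k) = collisionFrequency k := by
  simp only [collisionFrequency, mul_neg, sin_neg, cos_neg, neg_sq]

lemma collisionFrequency_add_one (k : ℝ) : collisionFrequency (k + 1) = collisionFrequency k := by
  simp only [collisionFrequency, mul_add_one, sin_add_pi, cos_add_pi, neg_sq]

@[fun_prop]
lemma continuous_collisionFrequency : Continuous collisionFrequency := by
  unfold collisionFrequency; fun_prop

noncomputable def collisionOperator (f : ℝ → ℝ) (k : ℝ) : ℝ :=
  ∫ k' in (0:ℝ)..1, collisionKernel k k' * (f k' - f k)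

lemma collisionOperator_eq_integral_mul_sub (k : ℝ) {f : ℝ → ℝ} (hf : Continuous f) :
    collisionOperator f k =
      (∫ x in (0:ℝ)..1, collisionKernel k x * f x) - collisionFrequency k * f k := by
  simp only [collisionOperator, mul_sub]
  rw [intervalIntegral.integral_sub (Continuous.intervalIntegrable (by fun_prop) _ _)
    (Continuous.intervalIntegrable (by fun_prop) _ _), intervalIntegral.integral_mul_const,
    integral_collisionKernel_right]

lemma collisionOperator_sub (k : ℝ) {f g : ℝ → ℝ} (hf : Continuous f) (hg : Continuous g) :
    collisionOperator (f - g) k = collisionOperator f k - collisionOperator g k := by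
  rw [collisionOperator, collisionOperator, collisionOperator, ← intervalIntegral.integral_sub
    (Continuous.intervalIntegrable (by fun_prop) _ _)
    (Continuous.intervalIntegrable (by fun_prop) _ _)]
  congr 1 with x
  simp only [Pi.sub_apply]
  ring

lemma collisionOperator_of_odd (k : ℝ) {f : ℝ → ℝ} (hf : Continuous f)
    (hodd : ∀ x, f (-x) = -f x) (hper : Function.Periodic f 1) :
    collisionOperator f k = -(collisionFrequency k * f k) := by
  have hzero : ∫ x in (0:ℝ)..1, collisionKernel k x * f x = 0 :=
    Function.Periodic.intervalIntegral_eq_zero_of_odd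
      (fun x ↦ by simp only [collisionKernel_add_one_right, hper x])
      (fun x ↦ by rw [collisionKernel_neg_right, hodd, mul_neg])
  rw [collisionOperator_eq_integral_mul_sub k hf, hzero, zero_sub]

lemma abs_collisionOperator_le (k : ℝ) {f : ℝ → ℝ} {C : ℝ} (hC : ∀ x, |f x| ≤ C) :
    |collisionOperator f k| ≤ 40 / 3 * C := by
  have hbound : ∀ x, ‖collisionKernel k x * (f x - f k)‖ ≤ 20 / 3 * (2 * C) := fun x ↦ by
    rw [Real.norm_eq_abs, abs_mul]
    gcongr
    · exact abs_collisionKernel_le k x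
    · exact (abs_sub _ _).trans (by linarith [hC x, hC k])
  have hint := intervalIntegral.norm_integral_le_of_norm_le_const (a := 0) (b := 1)
    (fun x _ ↦ hbound x)
  rw [Real.norm_eq_abs, sub_zero, abs_one, mul_one] at hint
  rw [collisionOperator]
  linarith

section DerivBoundedBySup

variable {X : Type*} {f f' : X → ℝ → ℝ} {a b L : ℝ}

lemma abs_le_half_of_deriv_le_mul_sup (hab : L * (b - a) ≤ 1 / 2) (ha : ∀ x, f x a = 0)
    (hf : ∀ x, ∀ t ∈ Icc a b, HasDerivWithinAt (f x) (f' x t) (Icc a b) t)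
    (hf' : ∀ t ∈ Icc a b, ∀ C, (∀ x, |f x t| ≤ C) → ∀ x, |f' x t| ≤ L * C)
    {C : ℝ} (hC : ∀ x, ∀ t ∈ Icc a b, |f x t| ≤ C) :
    ∀ x, ∀ t ∈ Icc a b, |f x t| ≤ C / 2 := by
  intro x t ht
  have hC0 : 0 ≤ C := (abs_nonneg _).trans (hC x t ht)
  have hLC : 0 ≤ L * C := (abs_nonneg _).trans (hf' t ht C (fun y ↦ hC y t ht) x)
  have hmvt := (convex_Icc a b).norm_image_sub_le_of_norm_hasDerivWithin_le (hf x)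
    (fun s hs ↦ hf' s hs C (fun y ↦ hC y s hs) x) (left_mem_Icc.2 (ht.1.trans ht.2)) ht
  rw [ha, sub_zero, Real.norm_eq_abs, Real.norm_eq_abs, abs_of_nonneg (sub_nonneg.2 ht.1)]
    at hmvt
  calc |f x t| ≤ L * C * (t - a) := hmvt
    _ ≤ L * C * (b - a) := by gcongr; exact ht.2
    _ = L * (b - a) * C := by ring
    _ ≤ 1 / 2 * C := by gcongr
    _ = C / 2 := by ring

lemma eq_zero_on_Icc_of_deriv_le_mul_sup_of_short (hab : L * (b - a) ≤ 1 / 2)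
    (ha : ∀ x, f x a = 0)
    (hf : ∀ x, ∀ t ∈ Icc a b, HasDerivWithinAt (f x) (f' x t) (Icc a b) t)
    (hf' : ∀ t ∈ Icc a b, ∀ C, (∀ x, |f x t| ≤ C) → ∀ x, |f' x t| ≤ L * C)
    {B : ℝ} (hB : ∀ x, ∀ t ∈ Icc a b, |f x t| ≤ B) :
    ∀ x, ∀ t ∈ Icc a b, f x t = 0 := by
  have hpow : ∀ m : ℕ, ∀ x, ∀ t ∈ Icc a b, |f x t| ≤ B / 2 ^ m := by
    intro m
    induction m with
    | zero => simpa using hB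
    | succ m ih =>
      simpa only [pow_succ, div_div] using abs_le_half_of_deriv_le_mul_sup hab ha hf hf' ih
  intro x t ht
  have hlim : Tendsto (fun m : ℕ ↦ B / 2 ^ m) atTop (𝓝 0) :=
    tendsto_const_nhds.div_atTop (tendsto_pow_atTop_atTop_of_one_lt one_lt_two)
  exact abs_nonpos_iff.mp (ge_of_tendsto' hlim fun m ↦ hpow m x t ht)

theorem eq_zero_on_Icc_of_deriv_le_mul_sup (ha : ∀ x, f x a = 0)
    (hf : ∀ x, ∀ t ∈ Icc a b, HasDerivWithinAt (f x) (f' x t) (Icc a b) t)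
    (hf' : ∀ t ∈ Icc a b, ∀ C, (∀ x, |f x t| ≤ C) → ∀ x, |f' x t| ≤ L * C)
    {B : ℝ} (hB : ∀ x, ∀ t ∈ Icc a b, |f x t| ≤ B) :
    ∀ x, ∀ t ∈ Icc a b, f x t = 0 := by
  intro x t ht
  have hab : 0 ≤ b - a := by linarith [ht.1, ht.2]
  obtain ⟨n, hn_pos, hn⟩ : ∃ n : ℕ, 0 < n ∧ 2 * L * (b - a) ≤ n :=
    ⟨⌈2 * L * (b - a)⌉₊ + 1, Nat.succ_pos _, by
      push_cast; linarith [Nat.le_ceil (2 * L * (b - a))]⟩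
  set h := (b - a) / n with h_def
  have hh : 0 ≤ h := by positivity
  have hnh : a + n * h = b := by rw [h_def]; field_simp; ring
  have hLh : L * h ≤ 1 / 2 := by
    rw [h_def, mul_div_assoc', div_le_iff₀ (by exact_mod_cast hn_pos)]; linarith
  have key : ∀ m ≤ n, ∀ x, ∀ t ∈ Icc a (a + m * h), f x t = 0 := by
    intro m
    induction m with
    | zero =>
      intro _ x t ht
      rw [CharP.cast_eq_zero, zero_mul, add_zero, Icc_self, mem_singleton_iff] at ht
      rw [ht]; exact ha x
    | succ m ih =>
      intro hm x t ht
      have hsub : Icc (a + m * h) (a + (m + 1) * h) ⊆ Icc a b := by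
        apply Icc_subset_Icc (by nlinarith)
        rw [← hnh]; gcongr; exact_mod_cast hm
      rcases le_or_gt t (a + m * h) with hle | hlt
      · exact ih (by omega) x t ⟨ht.1, hle⟩
      · refine eq_zero_on_Icc_of_deriv_le_mul_sup_of_short (by ring_nf; linarith)
          (fun y ↦ ih (by omega) y _ ⟨by nlinarith, le_rfl⟩)
          (fun y s hs ↦ (hf y s (hsub hs)).mono hsub) (fun s hs ↦ hf' s (hsub hs))
          (fun y s hs ↦ hB y s (hsub hs)) x t ⟨hlt.le, by exact_mod_cast ht.2⟩
  exact key n le_rfl x t (hnh ▸ ht)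

end DerivBoundedBySup

lemma hasDerivAt_mul_exp_collisionFrequency (γ : ℝ) {W₀ : ℝ → ℝ} (hcont : Continuous W₀)
    (hodd : ∀ k, W₀ (-k) = -W₀ k) (hper : Function.Periodic W₀ 1) (k t : ℝ) :
    HasDerivAt (fun t ↦ W₀ k * exp (-(γ * collisionFrequency k * t)))
      (γ * collisionOperator (fun k' ↦ W₀ k' * exp (-(γ * collisionFrequency k' * t))) k) t := by
  rw [collisionOperator_of_odd k (by fun_prop)
    (fun x ↦ by rw [hodd, collisionFrequency_neg, neg_mul])
    (fun x ↦ by rw [hper x, collisionFrequency_add_one])]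
  have hlin := ((hasDerivAt_id' t).const_mul (γ * collisionFrequency k)).fun_neg
  exact (hlin.exp.const_mul (W₀ k)).congr_deriv (by ring)

theorem collisionOperator_solution_unique {γ T M N : ℝ} {W V : ℝ → ℝ → ℝ}
    (hWcont : ∀ t, Continuous fun k ↦ W k t) (hVcont : ∀ t, Continuous fun k ↦ V k t)
    (hW : ∀ k t, HasDerivAt (fun t ↦ W k t) (γ * collisionOperator (fun k' ↦ W k' t) k) t)
    (hV : ∀ k t, HasDerivAt (fun t ↦ V k t) (γ * collisionOperator (fun k' ↦ V k' t) k) t)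
    (hWbdd : ∀ k, ∀ t ∈ Icc 0 T, |W k t| ≤ M) (hVbdd : ∀ k, ∀ t ∈ Icc 0 T, |V k t| ≤ N)
    (h0 : ∀ k, W k 0 = V k 0) :
    ∀ k, ∀ t ∈ Icc 0 T, W k t = V k t := by
  have hderiv : ∀ k t, HasDerivAt (fun t ↦ W k t - V k t)
      (γ * collisionOperator (fun k' ↦ W k' t - V k' t) k) t := fun k t ↦ by
    refine ((hW k t).sub (hV k t)).congr_deriv ?_
    rw [← mul_sub, ← collisionOperator_sub k (hWcont t) (hVcont t)]
    rfl
  have hzero := eq_zero_on_Icc_of_deriv_le_mul_sup (f := fun k t ↦ W k t - V k t)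
    (L := |γ| * (40 / 3))
    (fun k ↦ sub_eq_zero.2 (h0 k)) (fun k t _ ↦ (hderiv k t).hasDerivWithinAt)
    (fun t _ C hC k ↦ by
      rw [abs_mul, mul_assoc]
      gcongr
      exact abs_collisionOperator_le k hC)
    (fun k t ht ↦ (abs_sub (W k t) (V k t)).trans (add_le_add (hWbdd k t ht) (hVbdd k t ht)))
  exact fun k t ht ↦ sub_eq_zero.1 (hzero k t ht)

theorem odd_solution_decay_general (γ : ℝ) (hγ : 0 < γ)
    (W : ℝ → ℝ → ℝ) (W₀ : ℝ → ℝ)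
    (hW₀odd : ∀ k, W₀ (-k) = -W₀ k)
    (hW₀per : ∀ k, W₀ (k + 1) = W₀ k)
    (hW₀bdd : ∃ M, ∀ k, |W₀ k| ≤ M)
    (hWcont : ∀ t, Continuous fun k => W k t)
    (hWbdd : ∀ T > (0:ℝ), ∃ M, ∀ k, ∀ t ∈ Set.Icc (0:ℝ) T, |W k t| ≤ M)
    (hinit : ∀ k, W k 0 = W₀ k)
    (hevol : ∀ k t, HasDerivAt (fun t => W k t)
      (γ * ∫ k' in (0:ℝ)..1, collisionKernel k k' * (W k' t - W k t)) t) :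
    ∀ k : ℝ, ∀ t ≥ (0:ℝ),
      W k t = W₀ k *
        Real.exp (-(γ * ((4/3) * sin (π*k)^2 * (1 + 2 * cos (π*k)^2)) * t)) := by
  intro k t ht
  have hW₀cont : Continuous W₀ := by simpa only [hinit] using hWcont 0
  obtain ⟨M, hM⟩ := hWbdd (t + 1) (by linarith)
  obtain ⟨M₀, hM₀⟩ := hW₀bdd
  have hVbdd : ∀ k, ∀ s ∈ Icc 0 (t + 1),
      |W₀ k * exp (-(γ * collisionFrequency k * s))| ≤ M₀ := fun k s hs ↦ by
    have hexp : exp (-(γ * collisionFrequency k * s)) ≤ 1 := exp_le_one_iff.2 <| neg_nonpos.2 <|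
      mul_nonneg (mul_nonneg hγ.le (collisionFrequency_nonneg k)) hs.1
    rw [abs_mul, abs_of_pos (exp_pos _)]
    exact (mul_le_of_le_one_right (abs_nonneg _) hexp).trans (hM₀ k)
  exact collisionOperator_solution_unique hWcont (fun s ↦ by fun_prop)
    hevol (hasDerivAt_mul_exp_collisionFrequency γ hW₀cont hW₀odd hW₀per) hM hVbdd
    (fun k ↦ by simp [hinit]) k t ⟨ht, by linarith⟩

/-- for odd bounded initial data, the solution of the homogeneous
Boltzmann equation is `W(k,t) = W₀(k) e^{-γ φ(k) t}` with
`φ(k) = (4/3) sin²(πk)(1 + 2cos²(πk))`. -/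
theorem odd_solution_decay (γ : ℝ) (hγ : 0 < γ)
    (W : ℝ → ℝ → ℝ) (W₀ : ℝ → ℝ)
    (hW₀odd : ∀ k, W₀ (-k) = -W₀ k)
    (hW₀per : ∀ k, W₀ (k + 1) = W₀ k)
    (hW₀bdd : ∃ M, ∀ k, |W₀ k| ≤ M)
    (hWper : ∀ k t, W (k + 1) t = W k t)
    (hWcont : ∀ t, Continuous fun k => W k t)
    (hWbdd : ∀ T > (0:ℝ), ∃ M, ∀ k, ∀ t ∈ Set.Icc (0:ℝ) T, |W k t| ≤ M)
    (hinit : ∀ k, W k 0 = W₀ k)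
    (hevol : ∀ k t, HasDerivAt (fun t => W k t)
      (γ * ∫ k' in (0:ℝ)..1, collisionKernel k k' * (W k' t - W k t)) t) :
    ∀ k : ℝ, ∀ t ≥ (0:ℝ),
      W k t = W₀ k *
        Real.exp (-(γ * ((4/3) * sin (π*k)^2 * (1 + 2 * cos (π*k)^2)) * t)) :=
  odd_solution_decay_general γ hγ W W₀ hW₀odd hW₀per hW₀bdd hWcont hWbdd hinit hevol
end
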